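/- arXiv:2302.04441 — 3 statements merged into one kernel-verified Lean document; each statement's English description precedes it below -/
import Mathlib

section
/- For any vectors x_1, ..., x_n in R^k and any γ > 0, letting S_γ = γ I + sum_{i=1}^n x_i x_i^T, the sum over j of sqrt(x_j^T S_γ^{-1} x_j) is at most sqrt(n*k). -/
/-!
Write `a_j = x_jᵀ S⁻¹ x_j ≥ 0` and `P = ∑ x_i x_iᵀ`, so `S = γ I + P`. Cauchy–Schwarz gives
`∑ √a_j ≤ √(n ∑ a_j)`, and `∑ a_j = tr (P S⁻¹) = tr (S S⁻¹) - γ tr S⁻¹ = k - γ tr S⁻¹ ≤ k`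
because `S⁻¹` is positive definite.
-/

open Matrix Finset

lemma Real.sum_sqrt_le_sqrt_card_mul_sum {ι : Type*} (s : Finset ι) {a : ι → ℝ}
    (ha : ∀ i ∈ s, 0 ≤ a i) : ∑ i ∈ s, √(a i) ≤ √(#s * ∑ i ∈ s, a i) := by
  refine Real.le_sqrt_of_sq_le ?_
  calc (∑ i ∈ s, √(a i)) ^ 2 ≤ #s * ∑ i ∈ s, √(a i) ^ 2 := sq_sum_le_card_mul_sum_sq
    _ = #s * ∑ i ∈ s, a i := by
      rw [Finset.sum_congr rfl fun i hi => Real.sq_sqrt (ha i hi)]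

namespace Matrix

variable {n R : Type*} [Fintype n]

lemma dotProduct_mulVec_self_eq_trace [CommSemiring R] (v : n → R) (M : Matrix n n R) :
    v ⬝ᵥ M *ᵥ v = trace (vecMulVec v v * M) := by
  rw [vecMulVec_mul, trace_vecMulVec, dotProduct_mulVec, dotProduct_comm]

lemma sum_dotProduct_mulVec_self_eq_trace [CommSemiring R] {ι : Type*} (s : Finset ι)
    (v : ι → n → R) (M : Matrix n n R) :
    ∑ i ∈ s, v i ⬝ᵥ M *ᵥ v i = trace ((∑ i ∈ s, vecMulVec (v i) (v i)) * M) := by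
  simp only [Finset.sum_mul, trace_sum, dotProduct_mulVec_self_eq_trace]

lemma posSemidef_sum_vecMulVec_self {ι : Type*} (s : Finset ι) (v : ι → n → ℝ) :
    (∑ i ∈ s, vecMulVec (v i) (v i)).PosSemidef :=
  posSemidef_sum s fun i _ => by simpa using posSemidef_vecMulVec_self_star (v i)

variable [DecidableEq n]

lemma PosSemidef.trace_mul_inv_smul_one_add_le_card {P : Matrix n n ℝ} (hP : P.PosSemidef)
    {γ : ℝ} (hγ : 0 < γ) : trace (P * (γ • 1 + P)⁻¹) ≤ Fintype.card n := by
  set S := γ • (1 : Matrix n n ℝ) + P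
  have hS : S.PosDef := (PosDef.one.smul hγ).add_posSemidef hP
  have hPS : P = S - γ • 1 := by simp [S]
  have htrace : trace (P * S⁻¹) = Fintype.card n - γ * trace S⁻¹ := by
    rw [hPS, sub_mul, trace_sub, mul_nonsing_inv S (S.isUnit_iff_isUnit_det.mp hS.isUnit), trace_one, smul_mul,
      one_mul, trace_smul, smul_eq_mul]
  have := mul_nonneg hγ.le hS.inv.posSemidef.trace_nonneg
  linarith

end Matrix

theorem stmt1 (n k : ℕ) (x : Fin n → Fin k → ℝ) (γ : ℝ) (hγ : 0 < γ)
    (S : Matrix (Fin k) (Fin k) ℝ)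
    (hS : S = γ • (1 : Matrix (Fin k) (Fin k) ℝ) + ∑ i, vecMulVec (x i) (x i)) :
    ∑ j, Real.sqrt (x j ⬝ᵥ S⁻¹.mulVec (x j)) ≤ Real.sqrt (n * k) := by
  have hP := posSemidef_sum_vecMulVec_self univ x
  have hSinv : S⁻¹.PosSemidef := hS ▸ ((PosDef.one.smul hγ).add_posSemidef hP).inv.posSemidef
  have hnonneg (j : Fin n) : 0 ≤ x j ⬝ᵥ S⁻¹ *ᵥ x j := by
    simpa using hSinv.dotProduct_mulVec_nonneg (x j)
  have htrace : ∑ j, x j ⬝ᵥ S⁻¹ *ᵥ x j ≤ k := by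
    rw [sum_dotProduct_mulVec_self_eq_trace, hS]
    simpa using hP.trace_mul_inv_smul_one_add_le_card hγ
  calc ∑ j, √(x j ⬝ᵥ S⁻¹ *ᵥ x j) ≤ √(n * ∑ j, x j ⬝ᵥ S⁻¹ *ᵥ x j) := by
        simpa using Real.sum_sqrt_le_sqrt_card_mul_sum univ fun j _ => hnonneg j
    _ ≤ √(n * k) := by gcongr
end

section
/- Let A_m be a d×d positive semi-definite matrix with ||A_m|| ≤ L², let B, B̂ in R^{d×k} have orthonormal columns, let B_⊥ be an orthonormal complement of B (so B B^T + B_⊥ B_⊥^T = I_d), and suppose σ_min(B^T A_m B) ≥ ω > 0. If ||B̂^T B_⊥|| ≤ ω/(6L²) and ω ≤ L², then σ_min(B̂^T A_m B̂) ≥ (1 − ω²/(36L⁴))·ω − ω/2 > 0; in particular B̂^T A_m B̂ is invertible. -/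
/-!
For a unit vector `x`, the unit vector `v = B̂ x` splits as `v = B p + B⊥ q` with `p = Bᵀ v`,
`q = B⊥ᵀ v`, `‖p‖² + ‖q‖² = 1` and `‖q‖ ≤ ‖B̂ᵀ B⊥‖ ≤ ε`. In the expansion of `vᵀ A v` the `B`-block
is at least `ω ‖p‖² ≥ ω (1 - ε²)`, the `B⊥`-block is nonnegative because `A` is positive
semidefinite, and each of the two cross terms is at least `-‖A‖ ε`. With `ε = ω / (6 L²)` and
`‖A‖ ≤ L²` this gives `xᵀ (B̂ᵀ A B̂) x ≥ ω (1 - ε²) - ω / 3`.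
-/

open Matrix

/-- Spectral (ℓ2 operator) norm of a real matrix. -/
noncomputable def specNorm {m n : ℕ} (A : Matrix (Fin m) (Fin n) ℝ) : ℝ :=
  ⨆ x : {x : Fin n → ℝ // ∑ i, x i ^ 2 = 1},
    Real.sqrt (∑ i, (A.mulVec (x : Fin n → ℝ) i) ^ 2)

/-- Minimum eigenvalue (Rayleigh quotient minimum) of a square real matrix. -/
noncomputable def minEig {d : ℕ} (A : Matrix (Fin d) (Fin d) ℝ) : ℝ :=
  ⨅ x : {x : Fin d → ℝ // ∑ i, x i ^ 2 = 1},
    (x : Fin d → ℝ) ⬝ᵥ A.mulVec (x : Fin d → ℝ)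

open WithLp
open scoped Matrix.Norms.L2Operator

section
variable {m n : ℕ}

lemma norm_toLp_sq (x : Fin n → ℝ) : ‖toLp 2 x‖ ^ 2 = ∑ i, x i ^ 2 :=
  EuclideanSpace.real_norm_sq_eq _

lemma norm_toLp_sq_eq_dotProduct (x : Fin n → ℝ) : ‖toLp 2 x‖ ^ 2 = x ⬝ᵥ x := by
  rw [norm_toLp_sq]; simp [dotProduct, sq]

lemma norm_toLp_eq_one_iff (x : Fin n → ℝ) : ‖toLp 2 x‖ = 1 ↔ ∑ i, x i ^ 2 = 1 := by
  rw [← norm_toLp_sq, pow_eq_one_iff_of_nonneg (norm_nonneg _) two_ne_zero]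

lemma norm_toLp_mulVec_le (M : Matrix (Fin m) (Fin n) ℝ) (x : Fin n → ℝ) :
    ‖toLp 2 (M *ᵥ x)‖ ≤ ‖M‖ * ‖toLp 2 x‖ :=
  M.l2_opNorm_mulVec (toLp 2 x)

theorem specNorm_eq_l2_opNorm (M : Matrix (Fin m) (Fin n) ℝ) : specNorm M = ‖M‖ := by
  have hterm : ∀ x : {x : Fin n → ℝ // ∑ i, x i ^ 2 = 1},
      √(∑ i, (M *ᵥ (x : Fin n → ℝ)) i ^ 2) = ‖toLp 2 (M *ᵥ (x : Fin n → ℝ))‖ := fun x => by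
    rw [← norm_toLp_sq, Real.sqrt_sq (norm_nonneg _)]
  have hle : ∀ x : {x : Fin n → ℝ // ∑ i, x i ^ 2 = 1},
      √(∑ i, (M *ᵥ (x : Fin n → ℝ)) i ^ 2) ≤ ‖M‖ := fun x => by
    rw [hterm]
    simpa [(norm_toLp_eq_one_iff _).2 x.2] using norm_toLp_mulVec_le M x
  refine le_antisymm (Real.iSup_le hle (norm_nonneg _)) ?_
  rw [l2_opNorm_def, ← ContinuousLinearMap.sSup_sphere_eq_norm]
  refine Real.sSup_le ?_ (Real.iSup_nonneg fun _ => Real.sqrt_nonneg _)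
  rintro - ⟨x, hx, rfl⟩
  have hx' : ∑ i, x i ^ 2 = 1 := by
    rw [← EuclideanSpace.real_norm_sq_eq, mem_sphere_zero_iff_norm.1 hx, one_pow]
  refine le_trans (le_of_eq ?_) (le_ciSup ⟨‖M‖, Set.forall_mem_range.2 hle⟩ ⟨ofLp x, hx'⟩)
  rw [hterm]
  rfl

lemma norm_toLp_transpose_mulVec_le (M : Matrix (Fin m) (Fin n) ℝ) (x : Fin m → ℝ) :
    ‖toLp 2 (Mᵀ *ᵥ x)‖ ≤ ‖M‖ * ‖toLp 2 x‖ := by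
  have h := norm_toLp_mulVec_le Mᴴ x
  rwa [l2_opNorm_conjTranspose, conjTranspose_eq_transpose_of_trivial] at h

lemma dotProduct_transpose_mul_mul_mulVec {A : Matrix (Fin m) (Fin m) ℝ}
    (C : Matrix (Fin m) (Fin n) ℝ) (x y : Fin n → ℝ) :
    x ⬝ᵥ (Cᵀ * A * C) *ᵥ y = (C *ᵥ x) ⬝ᵥ A *ᵥ (C *ᵥ y) := by
  rw [← mulVec_mulVec, ← mulVec_mulVec, dotProduct_mulVec, vecMul_transpose]

lemma norm_toLp_mulVec_of_transpose_mul_self {M : Matrix (Fin m) (Fin n) ℝ}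
    (hM : Mᵀ * M = 1) (x : Fin n → ℝ) : ‖toLp 2 (M *ᵥ x)‖ = ‖toLp 2 x‖ := by
  have h := dotProduct_transpose_mul_mul_mulVec (A := 1) M x x
  rw [Matrix.mul_one, hM, one_mulVec, one_mulVec] at h
  rw [← sq_eq_sq₀ (norm_nonneg _) (norm_nonneg _), norm_toLp_sq_eq_dotProduct,
    norm_toLp_sq_eq_dotProduct, h]

lemma norm_toLp_sq_add_norm_toLp_sq {l : ℕ} {B : Matrix (Fin m) (Fin n) ℝ}
    {P : Matrix (Fin m) (Fin l) ℝ} (hBP : B * Bᵀ + P * Pᵀ = 1) (v : Fin m → ℝ) :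
    ‖toLp 2 (Bᵀ *ᵥ v)‖ ^ 2 + ‖toLp 2 (Pᵀ *ᵥ v)‖ ^ 2 = ‖toLp 2 v‖ ^ 2 := by
  have h {k : ℕ} (M : Matrix (Fin m) (Fin k) ℝ) :
      ‖toLp 2 (Mᵀ *ᵥ v)‖ ^ 2 = v ⬝ᵥ (M * Mᵀ) *ᵥ v := by
    rw [norm_toLp_sq_eq_dotProduct, ← mulVec_mulVec, dotProduct_mulVec v M, mulVec_transpose]
  rw [h, h, ← dotProduct_add, ← add_mulVec, hBP, one_mulVec, norm_toLp_sq_eq_dotProduct]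

lemma abs_dotProduct_mulVec_le (A : Matrix (Fin m) (Fin m) ℝ) (u w : Fin m → ℝ) :
    |u ⬝ᵥ A *ᵥ w| ≤ ‖A‖ * ‖toLp 2 u‖ * ‖toLp 2 w‖ := by
  have h : u ⬝ᵥ A *ᵥ w = inner ℝ (toLp 2 u) (toLp 2 (A *ᵥ w)) := by
    rw [EuclideanSpace.inner_toLp_toLp, star_trivial, dotProduct_comm]
  rw [h, mul_comm ‖A‖, mul_assoc]
  exact (abs_real_inner_le_norm _ _).trans
    (mul_le_mul_of_nonneg_left (norm_toLp_mulVec_le A w) (norm_nonneg _))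

lemma Matrix.PosSemidef.sub_le_dotProduct_mulVec_add {A : Matrix (Fin m) (Fin m) ℝ}
    (hA : A.PosSemidef) (u w : Fin m → ℝ) :
    u ⬝ᵥ A *ᵥ u - 2 * (‖A‖ * ‖toLp 2 u‖ * ‖toLp 2 w‖) ≤ (u + w) ⬝ᵥ A *ᵥ (u + w) := by
  have hww : 0 ≤ w ⬝ᵥ A *ᵥ w := by simpa using hA.dotProduct_mulVec_nonneg w
  have huw := neg_abs_le (u ⬝ᵥ A *ᵥ w)
  have hwu := neg_abs_le (w ⬝ᵥ A *ᵥ u)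
  have huw_le := abs_dotProduct_mulVec_le A u w
  have hwu_le := abs_dotProduct_mulVec_le A w u
  simp only [mulVec_add, dotProduct_add, add_dotProduct]
  nlinarith

lemma bddBelow_range_dotProduct_mulVec (M : Matrix (Fin n) (Fin n) ℝ) :
    BddBelow (Set.range fun x : {x : Fin n → ℝ // ∑ i, x i ^ 2 = 1} =>
      (x : Fin n → ℝ) ⬝ᵥ M *ᵥ (x : Fin n → ℝ)) := by
  refine ⟨-‖M‖, Set.forall_mem_range.2 fun x => ?_⟩
  have hx := (norm_toLp_eq_one_iff _).2 x.2
  have h := abs_dotProduct_mulVec_le M x x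
  rw [hx, mul_one, mul_one] at h
  exact neg_le_of_abs_le h

lemma minEig_mul_norm_sq_le (M : Matrix (Fin n) (Fin n) ℝ) (x : Fin n → ℝ) :
    minEig M * ‖toLp 2 x‖ ^ 2 ≤ x ⬝ᵥ M *ᵥ x := by
  rcases eq_or_ne x 0 with rfl | hx
  · simp
  set r := ‖toLp 2 x‖
  have hr : 0 < r := norm_pos_iff.2 (by simpa using hx)
  have hunit : ∑ i, (r⁻¹ • x) i ^ 2 = 1 := by
    rw [← norm_toLp_eq_one_iff, toLp_smul, norm_smul, norm_inv, Real.norm_of_nonneg hr.le,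
      inv_mul_cancel₀ hr.ne']
  have h := ciInf_le (bddBelow_range_dotProduct_mulVec M) ⟨_, hunit⟩
  simp only [mulVec_smul, dotProduct_smul, smul_dotProduct, smul_eq_mul] at h
  rw [← le_div_iff₀ (by positivity)]
  exact h.trans_eq (by ring)

lemma le_minEig {M : Matrix (Fin n) (Fin n) ℝ} (hn : 0 < n) {c : ℝ}
    (h : ∀ x : Fin n → ℝ, ‖toLp 2 x‖ = 1 → c ≤ x ⬝ᵥ M *ᵥ x) : c ≤ minEig M := by
  have : Nonempty {x : Fin n → ℝ // ∑ i, x i ^ 2 = 1} :=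
    ⟨⟨Pi.single ⟨0, hn⟩ 1, by simp [Pi.single_apply]⟩⟩
  exact le_ciInf fun x => h x ((norm_toLp_eq_one_iff _).2 x.2)

lemma pos_of_minEig_ne_zero {M : Matrix (Fin n) (Fin n) ℝ} (hM : minEig M ≠ 0) : 0 < n := by
  refine Nat.pos_of_ne_zero fun hn => hM ?_
  subst hn
  have : IsEmpty {x : Fin 0 → ℝ // ∑ i, x i ^ 2 = 1} := ⟨fun x => by simpa using x.2⟩
  exact Real.iInf_of_isEmpty _

lemma isUnit_of_minEig_pos {M : Matrix (Fin n) (Fin n) ℝ} (hM : 0 < minEig M) : IsUnit M := by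
  rw [← mulVec_injective_iff_isUnit]
  intro x y hxy
  by_contra hne
  have hpos : 0 < ‖toLp 2 (x - y)‖ := norm_pos_iff.2 (by simpa [sub_eq_zero] using hne)
  have h := minEig_mul_norm_sq_le M (x - y)
  rw [mulVec_sub, hxy, sub_self, dotProduct_zero] at h
  exact h.not_gt (by positivity)

lemma sub_le_dotProduct_mulVec_of_complement {k l : ℕ} {A : Matrix (Fin m) (Fin m) ℝ}
    (hA : A.PosSemidef) {B : Matrix (Fin m) (Fin k) ℝ} {P : Matrix (Fin m) (Fin l) ℝ}
    (hB : Bᵀ * B = 1) (hP : Pᵀ * P = 1) (hBP : B * Bᵀ + P * Pᵀ = 1)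
    {ω ε : ℝ} (hω : 0 ≤ ω) (hmin : ω ≤ minEig (Bᵀ * A * B))
    {v : Fin m → ℝ} (hv : ‖toLp 2 v‖ = 1) (hPv : ‖toLp 2 (Pᵀ *ᵥ v)‖ ≤ ε) :
    ω * (1 - ε ^ 2) - 2 * ‖A‖ * ε ≤ v ⬝ᵥ A *ᵥ v := by
  set p := Bᵀ *ᵥ v
  set q := Pᵀ *ᵥ v
  have hsplit : B *ᵥ p + P *ᵥ q = v := by
    simp only [p, q, mulVec_mulVec, ← add_mulVec, hBP, one_mulVec]
  have hpq := norm_toLp_sq_add_norm_toLp_sq hBP v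
  rw [hv, one_pow] at hpq
  have hq : ‖toLp 2 q‖ ^ 2 ≤ ε ^ 2 := pow_le_pow_left₀ (norm_nonneg _) hPv 2
  have hu : ‖toLp 2 (B *ᵥ p)‖ ≤ 1 := by
    rw [norm_toLp_mulVec_of_transpose_mul_self hB]
    nlinarith [norm_nonneg (toLp 2 p), norm_nonneg (toLp 2 q)]
  have hw : ‖toLp 2 (P *ᵥ q)‖ ≤ ε := by
    rwa [norm_toLp_mulVec_of_transpose_mul_self hP]
  have hblock : ω * (1 - ε ^ 2) ≤ (B *ᵥ p) ⬝ᵥ A *ᵥ (B *ᵥ p) := by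
    rw [← dotProduct_transpose_mul_mul_mulVec]
    calc ω * (1 - ε ^ 2) ≤ ω * ‖toLp 2 p‖ ^ 2 := by gcongr; linarith
      _ ≤ minEig (Bᵀ * A * B) * ‖toLp 2 p‖ ^ 2 := by gcongr
      _ ≤ _ := minEig_mul_norm_sq_le _ _
  have hcross : ‖toLp 2 (B *ᵥ p)‖ * ‖toLp 2 (P *ᵥ q)‖ ≤ ε := by
    simpa using mul_le_mul hu hw (norm_nonneg _) zero_le_one
  have h := hA.sub_le_dotProduct_mulVec_add (B *ᵥ p) (P *ᵥ q)
  rw [hsplit] at h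
  nlinarith [norm_nonneg A]

theorem sub_le_minEig_of_complement {k l r : ℕ} (hr : 0 < r) {A : Matrix (Fin m) (Fin m) ℝ}
    (hA : A.PosSemidef) {B : Matrix (Fin m) (Fin k) ℝ} {P : Matrix (Fin m) (Fin l) ℝ}
    (hB : Bᵀ * B = 1) (hP : Pᵀ * P = 1) (hBP : B * Bᵀ + P * Pᵀ = 1)
    {ω ε : ℝ} (hω : 0 ≤ ω) (hmin : ω ≤ minEig (Bᵀ * A * B))
    {C : Matrix (Fin m) (Fin r) ℝ} (hC : Cᵀ * C = 1) (hCP : ‖Cᵀ * P‖ ≤ ε) :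
    ω * (1 - ε ^ 2) - 2 * ‖A‖ * ε ≤ minEig (Cᵀ * A * C) := by
  refine le_minEig hr fun x hx => ?_
  rw [dotProduct_transpose_mul_mul_mulVec]
  refine sub_le_dotProduct_mulVec_of_complement hA hB hP hBP hω hmin
    (by rwa [norm_toLp_mulVec_of_transpose_mul_self hC]) ?_
  calc ‖toLp 2 (Pᵀ *ᵥ C *ᵥ x)‖ = ‖toLp 2 ((Cᵀ * P)ᵀ *ᵥ x)‖ := by
        rw [transpose_mul, transpose_transpose, mulVec_mulVec]
    _ ≤ ‖Cᵀ * P‖ := by simpa only [hx, mul_one] using norm_toLp_transpose_mulVec_le _ x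
    _ ≤ ε := hCP

end

theorem stmt10 (d k : ℕ) (A : Matrix (Fin d) (Fin d) ℝ) (hA : A.PosSemidef)
    (L om : ℝ) (hom : 0 < om) (homL : om ≤ L ^ 2) (hAnorm : specNorm A ≤ L ^ 2)
    (B Bhat : Matrix (Fin d) (Fin k) ℝ) (Bperp : Matrix (Fin d) (Fin (d - k)) ℝ)
    (hB : Bᵀ * B = 1) (hBhat : Bhatᵀ * Bhat = 1) (hBperp : Bperpᵀ * Bperp = 1)
    (hcomp : B * Bᵀ + Bperp * Bperpᵀ = 1)
    (hmin : om ≤ minEig (Bᵀ * A * B))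
    (hclose : specNorm (Bhatᵀ * Bperp) ≤ om / (6 * L ^ 2)) :
    (1 - om ^ 2 / (36 * L ^ 4)) * om - om / 2 ≤ minEig (Bhatᵀ * A * Bhat) ∧
    0 < (1 - om ^ 2 / (36 * L ^ 4)) * om - om / 2 ∧
    IsUnit (Bhatᵀ * A * Bhat) := by
  rw [specNorm_eq_l2_opNorm] at hAnorm hclose
  have hk : 0 < k := pos_of_minEig_ne_zero (hom.trans_le hmin).ne'
  have hlow := sub_le_minEig_of_complement hk hA hB hBperp hcomp hom.le hmin hBhat hclose
  have hL2 : 0 < L ^ 2 := hom.trans_le homL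
  have hL : L ≠ 0 := by rintro rfl; norm_num at hL2
  have hεsq : (om / (6 * L ^ 2)) ^ 2 = om ^ 2 / (36 * L ^ 4) := by field_simp; ring
  have hcross : 2 * ‖A‖ * (om / (6 * L ^ 2)) ≤ om / 3 := by
    calc 2 * ‖A‖ * (om / (6 * L ^ 2)) ≤ 2 * L ^ 2 * (om / (6 * L ^ 2)) := by gcongr
      _ = om / 3 := by field_simp; ring
  have hsmall : om ^ 2 / (36 * L ^ 4) ≤ 1 / 36 := by
    rw [div_le_div_iff₀ (by positivity) (by norm_num)]
    nlinarith
  have hpos : 0 < (1 - om ^ 2 / (36 * L ^ 4)) * om - om / 2 := by nlinarith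
  have hbound : (1 - om ^ 2 / (36 * L ^ 4)) * om - om / 2 ≤ minEig (Bhatᵀ * A * Bhat) := by
    rw [hεsq] at hlow
    linarith
  exact ⟨hbound, hpos, isUnit_of_minEig_pos (hpos.trans_le hbound)⟩
end

section
/- Let Z and Z̄ be symmetric d×d matrices, let B̂ in R^{d×k} consist of the top-k eigenvectors of Z, let B̂_⊥ be an orthonormal complement of B̂, and let B in R^{d×k} consist of the top-k eigenvectors of Z̄. Suppose the eigengap σ_k(Z̄) − σ_{k+1}(Z̄) ≥ g > 0 and ||Z − Z̄|| ≤ g/2. Then ||B̂_⊥^T B|| ≤ ||Z − Z̄|| / (g − ||Z − Z̄||) ≤ (2/g)·||Z − Z̄||. -/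
/-!
Write `ε = ‖Z − Z̄‖`. Weyl's inequality moves the eigengap from `Z̄` to `Z`: testing `Z`, `Z̄` and
`Z − Z̄` on a nonzero vector of `span B̂ + ℝ B̂⊥ e_j` orthogonal to the columns of `B` (it exists by
counting dimensions) shows that every eigenvalue of `Z` on `B̂⊥` lies at least `g − ε` below every
eigenvalue of `Z̄` on `B`. The matrix `S = B̂⊥ᵀ B` solves the Sylvester equation
`S E₁ − D₂ S = B̂⊥ᵀ (Z̄ − Z) B`, whose right-hand side has norm at most `ε`; pairing it with a top
singular pair `(u, x)` of `S` gives `(g − ε) ‖S‖ ≤ uᵀ (S E₁ − D₂ S) x ≤ ε`.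
-/

open Matrix

section WeightedSums

variable {ι : Type*} [Fintype ι]

lemma sum_mul_sq_le {a : ι → ℝ} {c : ℝ} (h : ∀ i, a i ≤ c) (x : ι → ℝ) :
    ∑ i, a i * x i ^ 2 ≤ c * ∑ i, x i ^ 2 := by
  rw [Finset.mul_sum]
  exact Finset.sum_le_sum fun i _ => mul_le_mul_of_nonneg_right (h i) (sq_nonneg _)

lemma le_sum_mul_sq {a : ι → ℝ} {c : ℝ} (h : ∀ i, c ≤ a i) (x : ι → ℝ) :
    c * ∑ i, x i ^ 2 ≤ ∑ i, a i * x i ^ 2 := by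
  rw [Finset.mul_sum]
  exact Finset.sum_le_sum fun i _ => mul_le_mul_of_nonneg_right (h i) (sq_nonneg _)

lemma sum_sq_eq_dotProduct (x : ι → ℝ) : ∑ i, x i ^ 2 = x ⬝ᵥ x := by
  simp only [dotProduct, sq]

lemma sqrt_sum_sq_smul (c : ℝ) (x : ι → ℝ) :
    √(∑ i, (c • x) i ^ 2) = |c| * √(∑ i, x i ^ 2) := by
  simp only [Pi.smul_apply, smul_eq_mul, mul_pow, ← Finset.mul_sum]
  rw [Real.sqrt_mul (sq_nonneg c), Real.sqrt_sq_eq_abs]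

lemma dotProduct_diagonal_mulVec_self [DecidableEq ι] (D x : ι → ℝ) :
    x ⬝ᵥ diagonal D *ᵥ x = ∑ i, D i * x i ^ 2 := by
  simp only [dotProduct, mulVec_diagonal]
  exact Finset.sum_congr rfl fun i _ => by ring

lemma dotProduct_mulVec_mul_diagonal_mul_transpose [DecidableEq ι] {d : ℕ} (P : Matrix (Fin d) ι ℝ)
    (D : ι → ℝ) (w : Fin d → ℝ) :
    w ⬝ᵥ (P * diagonal D * Pᵀ) *ᵥ w = ∑ i, D i * (Pᵀ *ᵥ w) i ^ 2 := by
  rw [← mulVec_mulVec, ← mulVec_mulVec, dotProduct_mulVec, ← mulVec_transpose,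
    dotProduct_diagonal_mulVec_self]

lemma le_sum_mul_sq_sub_sum_mul_sq {κ : Type*} [Fintype κ] {D : ι → ℝ} {E : κ → ℝ} {δ : ℝ}
    (hsep : ∀ i j, D i + δ ≤ E j) {u : ι → ℝ} {x : κ → ℝ} (hu : ∑ i, u i ^ 2 = 1)
    (hx : ∑ j, x j ^ 2 = 1) :
    δ ≤ ∑ j, E j * x j ^ 2 - ∑ i, D i * u i ^ 2 := by
  have hD : ∀ j, ∑ i, D i * u i ^ 2 + δ ≤ E j := fun j => by
    have := sum_mul_sq_le (fun i => le_sub_iff_add_le.mpr (hsep i j)) u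
    rw [hu, mul_one] at this
    linarith
  have := le_sum_mul_sq hD x
  rw [hx, mul_one] at this
  linarith

end WeightedSums

section SpecNorm

variable {m n : ℕ}

lemma specNorm_nonneg (A : Matrix (Fin m) (Fin n) ℝ) : 0 ≤ specNorm A :=
  Real.iSup_nonneg fun _ => Real.sqrt_nonneg _

lemma specNorm_le {A : Matrix (Fin m) (Fin n) ℝ} {c : ℝ} (hc : 0 ≤ c)
    (h : ∀ x : Fin n → ℝ, ∑ i, x i ^ 2 = 1 → √(∑ i, (A *ᵥ x) i ^ 2) ≤ c) : specNorm A ≤ c :=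
  Real.iSup_le (fun x => h x x.2) hc

lemma isCompact_sum_sq_eq_one : IsCompact {x : Fin n → ℝ | ∑ i, x i ^ 2 = 1} := by
  refine Metric.isCompact_of_isClosed_isBounded (isClosed_eq (by fun_prop) continuous_const) ?_
  refine (Metric.isBounded_closedBall (x := 0) (r := 1)).subset fun x hx => ?_
  rw [Metric.mem_closedBall, dist_zero_right, pi_norm_le_iff_of_nonneg zero_le_one]
  intro i
  have : x i ^ 2 ≤ 1 := hx ▸ Finset.single_le_sum (fun j _ => sq_nonneg (x j)) (Finset.mem_univ i)
  simpa [Real.norm_eq_abs] using (sq_le_one_iff_abs_le_one (x i)).mp this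

lemma continuous_sqrt_sum_sq_mulVec (A : Matrix (Fin m) (Fin n) ℝ) :
    Continuous fun x : Fin n → ℝ => √(∑ i, (A *ᵥ x) i ^ 2) := by
  fun_prop

lemma sqrt_sum_sq_mulVec_le_specNorm (A : Matrix (Fin m) (Fin n) ℝ) {x : Fin n → ℝ}
    (hx : ∑ i, x i ^ 2 = 1) : √(∑ i, (A *ᵥ x) i ^ 2) ≤ specNorm A := by
  have hbdd := isCompact_sum_sq_eq_one.bddAbove_image (continuous_sqrt_sum_sq_mulVec A).continuousOn
  rw [Set.image_eq_range] at hbdd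
  exact le_ciSup hbdd ⟨x, hx⟩

lemma sqrt_sum_sq_mulVec_le (A : Matrix (Fin m) (Fin n) ℝ) (x : Fin n → ℝ) :
    √(∑ i, (A *ᵥ x) i ^ 2) ≤ specNorm A * √(∑ i, x i ^ 2) := by
  set t := √(∑ i, x i ^ 2)
  rcases (Real.sqrt_nonneg (∑ i, x i ^ 2)).eq_or_lt with ht | ht
  · have hx : ∑ i, x i ^ 2 = 0 := le_antisymm (Real.sqrt_eq_zero'.mp ht.symm) (by positivity)
    rw [sum_sq_eq_dotProduct, dotProduct_self_eq_zero] at hx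
    simpa [hx] using mul_nonneg (specNorm_nonneg A) (Real.sqrt_nonneg _)
  have hunit : ∑ i, (t⁻¹ • x) i ^ 2 = 1 := by
    rw [← Real.sqrt_eq_one, sqrt_sum_sq_smul, abs_inv, abs_of_pos ht, inv_mul_cancel₀ ht.ne']
  calc √(∑ i, (A *ᵥ x) i ^ 2) = t * √(∑ i, (A *ᵥ (t⁻¹ • x)) i ^ 2) := by
        rw [mulVec_smul, sqrt_sum_sq_smul, abs_inv, abs_of_pos ht, mul_inv_cancel_left₀ ht.ne']
    _ ≤ t * specNorm A := by gcongr; exact sqrt_sum_sq_mulVec_le_specNorm A hunit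
    _ = specNorm A * t := mul_comm _ _

lemma exists_sqrt_sum_sq_mulVec_eq_specNorm (A : Matrix (Fin m) (Fin n) ℝ)
    (hA : 0 < specNorm A) : ∃ x : Fin n → ℝ, ∑ i, x i ^ 2 = 1 ∧
      √(∑ i, (A *ᵥ x) i ^ 2) = specNorm A := by
  rcases isEmpty_or_nonempty {x : Fin n → ℝ // ∑ i, x i ^ 2 = 1} with hE | ⟨⟨x₀, hx₀⟩⟩
  · exact (hA.ne' (Real.iSup_of_isEmpty _)).elim
  obtain ⟨x, hx, hmax⟩ := isCompact_sum_sq_eq_one.exists_isMaxOn ⟨x₀, hx₀⟩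
    (continuous_sqrt_sum_sq_mulVec A).continuousOn
  exact ⟨x, hx, le_antisymm (sqrt_sum_sq_mulVec_le_specNorm A hx)
    (specNorm_le (Real.sqrt_nonneg _) fun y hy => hmax hy)⟩

lemma dotProduct_mulVec_le_specNorm (A : Matrix (Fin m) (Fin n) ℝ) (u : Fin m → ℝ)
    (x : Fin n → ℝ) :
    u ⬝ᵥ A *ᵥ x ≤ √(∑ i, u i ^ 2) * (specNorm A * √(∑ i, x i ^ 2)) :=
  (Real.sum_mul_le_sqrt_mul_sqrt _ u (A *ᵥ x)).trans <| by
    gcongr; exact sqrt_sum_sq_mulVec_le A x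

lemma specNorm_mul_le {l : ℕ} (A : Matrix (Fin l) (Fin m) ℝ) (B : Matrix (Fin m) (Fin n) ℝ) :
    specNorm (A * B) ≤ specNorm A * specNorm B := by
  refine specNorm_le (mul_nonneg (specNorm_nonneg A) (specNorm_nonneg B)) fun x hx => ?_
  calc √(∑ i, ((A * B) *ᵥ x) i ^ 2) = √(∑ i, (A *ᵥ (B *ᵥ x)) i ^ 2) := by rw [mulVec_mulVec]
    _ ≤ specNorm A * √(∑ i, (B *ᵥ x) i ^ 2) := sqrt_sum_sq_mulVec_le A _
    _ ≤ specNorm A * (specNorm B * √(∑ i, x i ^ 2)) := by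
        gcongr
        · exact specNorm_nonneg A
        · exact sqrt_sum_sq_mulVec_le B x
    _ = specNorm A * specNorm B := by rw [hx, Real.sqrt_one, mul_one]

lemma specNorm_neg (A : Matrix (Fin m) (Fin n) ℝ) : specNorm (-A) = specNorm A := by
  simp only [specNorm, neg_mulVec, Pi.neg_apply, neg_sq]

lemma specNorm_sub_comm (A B : Matrix (Fin m) (Fin n) ℝ) : specNorm (A - B) = specNorm (B - A) := by
  rw [← neg_sub, specNorm_neg]

lemma specNorm_le_one_of_sum_sq_mulVec_le {A : Matrix (Fin m) (Fin n) ℝ}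
    (h : ∀ x, ∑ i, (A *ᵥ x) i ^ 2 ≤ ∑ i, x i ^ 2) : specNorm A ≤ 1 :=
  specNorm_le zero_le_one fun x hx => Real.sqrt_le_one.mpr (hx ▸ h x)

end SpecNorm

section OrthonormalFrames

variable {d a b : ℕ} {P : Matrix (Fin d) (Fin a) ℝ} {Q : Matrix (Fin d) (Fin b) ℝ}

lemma sum_sq_mulVec_of_transpose_mul_self (hP : Pᵀ * P = 1) (x : Fin a → ℝ) :
    ∑ i, (P *ᵥ x) i ^ 2 = ∑ i, x i ^ 2 := by
  rw [sum_sq_eq_dotProduct, sum_sq_eq_dotProduct, dotProduct_mulVec, ← mulVec_transpose,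
    mulVec_mulVec, hP, one_mulVec]

lemma sum_sq_transpose_mulVec_add (hc : P * Pᵀ + Q * Qᵀ = 1) (y : Fin d → ℝ) :
    ∑ i, (Pᵀ *ᵥ y) i ^ 2 + ∑ i, (Qᵀ *ᵥ y) i ^ 2 = ∑ i, y i ^ 2 := by
  simp only [sum_sq_eq_dotProduct, dotProduct_mulVec, ← mulVec_transpose, transpose_transpose,
    mulVec_mulVec]
  rw [← add_dotProduct, ← add_mulVec, hc, one_mulVec]

lemma transpose_mul_eq_zero_of_add_eq_one (hP : Pᵀ * P = 1) (hc : P * Pᵀ + Q * Qᵀ = 1) :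
    Qᵀ * P = 0 := by
  have h : (Qᵀ * P)ᴴ * (Qᵀ * P) = 0 := by
    rw [conjTranspose_eq_transpose_of_trivial, transpose_mul, transpose_transpose,
      Matrix.mul_assoc, ← Matrix.mul_assoc Q, eq_sub_of_add_eq' hc]
    simp only [Matrix.sub_mul, Matrix.mul_sub, Matrix.one_mul, ← Matrix.mul_assoc, hP, sub_self]
  exact conjTranspose_mul_self_eq_zero.mp h

lemma specNorm_le_one_of_transpose_mul_self (hP : Pᵀ * P = 1) : specNorm P ≤ 1 :=
  specNorm_le_one_of_sum_sq_mulVec_le fun x => (sum_sq_mulVec_of_transpose_mul_self hP x).le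

lemma specNorm_transpose_le_one (hc : P * Pᵀ + Q * Qᵀ = 1) : specNorm Qᵀ ≤ 1 :=
  specNorm_le_one_of_sum_sq_mulVec_le fun y => by
    linarith [sum_sq_transpose_mulVec_add hc y,
      Finset.sum_nonneg fun i (_ : i ∈ Finset.univ) => sq_nonneg ((Pᵀ *ᵥ y) i)]

lemma specNorm_transpose_mul_mul_le {k : ℕ} {B : Matrix (Fin d) (Fin k) ℝ}
    (hc : P * Pᵀ + Q * Qᵀ = 1) (hB : Bᵀ * B = 1) (A : Matrix (Fin d) (Fin d) ℝ) :
    specNorm (Qᵀ * A * B) ≤ specNorm A :=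
  calc specNorm (Qᵀ * A * B) ≤ specNorm Qᵀ * specNorm A * specNorm B :=
        (specNorm_mul_le _ _).trans (by gcongr; exacts [specNorm_nonneg B, specNorm_mul_le _ _])
    _ ≤ 1 * specNorm A * 1 :=
        mul_le_mul (mul_le_mul_of_nonneg_right (specNorm_transpose_le_one hc) (specNorm_nonneg A))
          (specNorm_le_one_of_transpose_mul_self hB) (specNorm_nonneg B)
          (by linarith [specNorm_nonneg A])
    _ = specNorm A := by ring

lemma dotProduct_mulVec_spectral {Z : Matrix (Fin d) (Fin d) ℝ} {D : Fin a → ℝ} {E : Fin b → ℝ}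
    (hZ : Z = P * diagonal D * Pᵀ + Q * diagonal E * Qᵀ) (w : Fin d → ℝ) :
    w ⬝ᵥ Z *ᵥ w = ∑ i, D i * (Pᵀ *ᵥ w) i ^ 2 + ∑ i, E i * (Qᵀ *ᵥ w) i ^ 2 := by
  rw [hZ, add_mulVec, dotProduct_add, dotProduct_mulVec_mul_diagonal_mul_transpose,
    dotProduct_mulVec_mul_diagonal_mul_transpose]

end OrthonormalFrames

theorem exists_singular_pair {m n : ℕ} (S : Matrix (Fin m) (Fin n) ℝ) (hS : 0 < specNorm S) :
    ∃ (x : Fin n → ℝ) (u : Fin m → ℝ), ∑ i, x i ^ 2 = 1 ∧ ∑ i, u i ^ 2 = 1 ∧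
      S *ᵥ x = specNorm S • u ∧ Sᵀ *ᵥ u = specNorm S • x := by
  obtain ⟨x, hx, hSx⟩ := exists_sqrt_sum_sq_mulVec_eq_specNorm S hS
  set σ := specNorm S
  have hSx2 : ∑ i, (S *ᵥ x) i ^ 2 = σ ^ 2 := by rw [← hSx, Real.sq_sqrt (by positivity)]
  set G := σ ^ 2 • (1 : Matrix (Fin n) (Fin n) ℝ) - Sᵀ * S
  have hG : ∀ z, star z ⬝ᵥ G *ᵥ z = σ ^ 2 * ∑ i, z i ^ 2 - ∑ i, (S *ᵥ z) i ^ 2 := fun z => by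
    rw [star_trivial, sub_mulVec, smul_mulVec, one_mulVec, ← mulVec_mulVec, dotProduct_sub,
      dotProduct_smul, smul_eq_mul, dotProduct_mulVec, ← mulVec_transpose, transpose_transpose,
      sum_sq_eq_dotProduct, sum_sq_eq_dotProduct, dotProduct_comm]
  have hGpsd : G.PosSemidef := by
    refine .of_dotProduct_mulVec_nonneg ?_ fun z => ?_
    · simp [G, IsHermitian, conjTranspose_eq_transpose_of_trivial, transpose_sub, transpose_mul]
    · have h := pow_le_pow_left₀ (Real.sqrt_nonneg _) (sqrt_sum_sq_mulVec_le S z) 2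
      rw [mul_pow, Real.sq_sqrt (by positivity), Real.sq_sqrt (by positivity)] at h
      rw [hG]
      linarith
  -- `x` maximizes `zᵀ Sᵀ S z` on the unit sphere, so the PSD form of `G` vanishes at `x`
  have hGx : G *ᵥ x = 0 := (hGpsd.dotProduct_mulVec_zero_iff x).mp (by rw [hG, hx, hSx2]; ring)
  have heig : Sᵀ *ᵥ (S *ᵥ x) = σ ^ 2 • x := by
    rw [sub_mulVec, smul_mulVec, one_mulVec, ← mulVec_mulVec, sub_eq_zero] at hGx
    exact hGx.symm
  refine ⟨x, σ⁻¹ • S *ᵥ x, hx, ?_, ?_, ?_⟩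
  · rw [← Real.sqrt_eq_one, sqrt_sum_sq_smul, hSx, abs_inv, abs_of_pos hS, inv_mul_cancel₀ hS.ne']
  · rw [smul_smul, mul_inv_cancel₀ hS.ne', one_smul]
  · rw [mulVec_smul, heig, smul_smul]
    congr 1
    field_simp

theorem mul_specNorm_le_specNorm_mul_diagonal_sub {p q : ℕ} (S : Matrix (Fin p) (Fin q) ℝ)
    {D : Fin p → ℝ} {E : Fin q → ℝ} {δ : ℝ} (hsep : ∀ i j, D i + δ ≤ E j) :
    δ * specNorm S ≤ specNorm (S * diagonal E - diagonal D * S) := by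
  rcases (specNorm_nonneg S).eq_or_lt with h0 | hpos
  · rw [← h0, mul_zero]
    exact specNorm_nonneg _
  obtain ⟨x, u, hx, hu, hSx, hSu⟩ := exists_singular_pair S hpos
  have hform : u ⬝ᵥ (S * diagonal E - diagonal D * S) *ᵥ x =
      specNorm S * (∑ j, E j * x j ^ 2 - ∑ i, D i * u i ^ 2) := by
    rw [sub_mulVec, dotProduct_sub, ← mulVec_mulVec, ← mulVec_mulVec, hSx, dotProduct_mulVec u S,
      ← mulVec_transpose, hSu, mulVec_smul, smul_dotProduct, dotProduct_smul,
      dotProduct_diagonal_mulVec_self, dotProduct_diagonal_mulVec_self, smul_eq_mul, smul_eq_mul,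
      mul_sub]
  calc δ * specNorm S ≤ specNorm S * (∑ j, E j * x j ^ 2 - ∑ i, D i * u i ^ 2) := by
        rw [mul_comm]
        exact mul_le_mul_of_nonneg_left (le_sum_mul_sq_sub_sum_mul_sq hsep hu hx) hpos.le
    _ = u ⬝ᵥ (S * diagonal E - diagonal D * S) *ᵥ x := hform.symm
    _ ≤ √(∑ i, u i ^ 2) * (specNorm (S * diagonal E - diagonal D * S) * √(∑ i, x i ^ 2)) :=
        dotProduct_mulVec_le_specNorm _ u x
    _ = specNorm (S * diagonal E - diagonal D * S) := by
        rw [hu, hx, Real.sqrt_one, one_mul, mul_one]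

lemma transpose_mul_sub_mul_eq_mul_diagonal_sub {d k l k' l' : ℕ} {Zm Zb : Matrix (Fin d) (Fin d) ℝ}
    {P : Matrix (Fin d) (Fin k) ℝ} {Q : Matrix (Fin d) (Fin l) ℝ} {B : Matrix (Fin d) (Fin k') ℝ}
    {Bp : Matrix (Fin d) (Fin l') ℝ} (hQP : Qᵀ * P = 0) (hQ : Qᵀ * Q = 1) (hB : Bᵀ * B = 1)
    (hBpB : Bpᵀ * B = 0) {D1 : Fin k → ℝ} {D2 : Fin l → ℝ} {E1 : Fin k' → ℝ} {E2 : Fin l' → ℝ}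
    (hZm : Zm = P * diagonal D1 * Pᵀ + Q * diagonal D2 * Qᵀ)
    (hZb : Zb = B * diagonal E1 * Bᵀ + Bp * diagonal E2 * Bpᵀ) :
    Qᵀ * (Zb - Zm) * B = Qᵀ * B * diagonal E1 - diagonal D2 * (Qᵀ * B) := by
  rw [hZm, hZb]
  simp only [Matrix.mul_sub, Matrix.sub_mul, Matrix.mul_add, Matrix.add_mul, Matrix.mul_assoc,
    hB, hBpB, Matrix.mul_one, Matrix.mul_zero, add_zero]
  rw [← Matrix.mul_assoc Qᵀ P, hQP, ← Matrix.mul_assoc Qᵀ Q, hQ, Matrix.zero_mul, Matrix.one_mul,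
    zero_add]

lemma exists_ne_zero_mulVec_add_smul_eq_zero {k : ℕ} (C : Matrix (Fin k) (Fin k) ℝ)
    (c : Fin k → ℝ) : ∃ (a : Fin k → ℝ) (t : ℝ), (a ≠ 0 ∨ t ≠ 0) ∧ C *ᵥ a + t • c = 0 := by
  let f : (Fin k → ℝ) × ℝ →ₗ[ℝ] Fin k → ℝ := C.mulVecLin.coprod (LinearMap.toSpanSingleton ℝ _ c)
  obtain ⟨⟨a, t⟩, hat, hne⟩ :=
    (Submodule.ne_bot_iff _).mp (LinearMap.ker_ne_bot_of_finrank_lt (f := f) (by simp))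
  refine ⟨a, t, ?_, by simpa [f] using hat⟩
  rw [← not_and_or]
  rintro ⟨rfl, rfl⟩
  exact hne rfl

lemma exists_ne_zero_transpose_mulVec_eq_zero {d k l : ℕ} {P B : Matrix (Fin d) (Fin k) ℝ}
    {Q : Matrix (Fin d) (Fin l) ℝ} (hP : Pᵀ * P = 1) (hQ : Qᵀ * Q = 1)
    (hc : P * Pᵀ + Q * Qᵀ = 1) (j : Fin l) :
    ∃ w : Fin d → ℝ, w ≠ 0 ∧ Bᵀ *ᵥ w = 0 ∧ ∀ i ≠ j, (Qᵀ *ᵥ w) i = 0 := by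
  -- `k + 1` unknowns `(a, t)` against the `k` equations `Bᵀ (P a + t Q e_j) = 0`
  obtain ⟨a, t, hat, hBw⟩ :=
    exists_ne_zero_mulVec_add_smul_eq_zero (Bᵀ * P) (Bᵀ *ᵥ Q *ᵥ Pi.single j 1)
  have hQP := transpose_mul_eq_zero_of_add_eq_one hP hc
  have hPQ : Pᵀ * Q = 0 := by simpa [transpose_mul] using congrArg transpose hQP
  set w := P *ᵥ a + t • Q *ᵥ Pi.single j 1
  have hPw : Pᵀ *ᵥ w = a := by
    simp only [w, mulVec_add, mulVec_smul, mulVec_mulVec, hP, hPQ, one_mulVec, zero_mulVec,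
      smul_zero, add_zero]
  have hQw : Qᵀ *ᵥ w = t • Pi.single j 1 := by
    simp only [w, mulVec_add, mulVec_smul, mulVec_mulVec, hQ, hQP, one_mulVec, zero_mulVec,
      zero_add]
  refine ⟨w, fun hw => ?_, ?_, fun i hi => ?_⟩
  · rw [hw, mulVec_zero] at hPw hQw
    have ht : 0 = t := by simpa using congrFun hQw j
    exact hat.elim (· hPw.symm) (· ht.symm)
  · simpa [w, mulVec_add, mulVec_smul, mulVec_mulVec] using hBw
  · simp [hQw, hi]

theorem weyl_le_add_specNorm_sub {d k l l' : ℕ} {Zm Zb : Matrix (Fin d) (Fin d) ℝ}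
    {P B : Matrix (Fin d) (Fin k) ℝ} {Q : Matrix (Fin d) (Fin l) ℝ}
    {Bp : Matrix (Fin d) (Fin l') ℝ} (hP : Pᵀ * P = 1) (hQ : Qᵀ * Q = 1)
    (hPQ : P * Pᵀ + Q * Qᵀ = 1) (hBBp : B * Bᵀ + Bp * Bpᵀ = 1)
    {D1 : Fin k → ℝ} {D2 : Fin l → ℝ} (hZm : Zm = P * diagonal D1 * Pᵀ + Q * diagonal D2 * Qᵀ)
    (htop : ∀ i j, D2 j ≤ D1 i) {E1 : Fin k → ℝ} {E2 : Fin l' → ℝ}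
    (hZb : Zb = B * diagonal E1 * Bᵀ + Bp * diagonal E2 * Bpᵀ) {M : ℝ} (hM : ∀ j, E2 j ≤ M)
    (j : Fin l) : D2 j ≤ M + specNorm (Zm - Zb) := by
  obtain ⟨w, hw0, hBw, hQw⟩ := exists_ne_zero_transpose_mulVec_eq_zero (B := B) hP hQ hPQ j
  have hwpos : 0 < ∑ i, w i ^ 2 := by
    refine (Finset.sum_nonneg fun i _ => sq_nonneg (w i)).lt_of_ne' ?_
    rwa [Ne, sum_sq_eq_dotProduct, dotProduct_self_eq_zero]
  have hZm_w : D2 j * ∑ i, w i ^ 2 ≤ w ⬝ᵥ Zm *ᵥ w := by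
    have hD2 : ∑ i, D2 i * (Qᵀ *ᵥ w) i ^ 2 = D2 j * ∑ i, (Qᵀ *ᵥ w) i ^ 2 := by
      rw [Finset.mul_sum]
      refine Finset.sum_congr rfl fun i _ => ?_
      rcases eq_or_ne i j with rfl | hi
      · rfl
      · simp [hQw i hi]
    rw [dotProduct_mulVec_spectral hZm, hD2, ← sum_sq_transpose_mulVec_add hPQ w, mul_add]
    linarith [le_sum_mul_sq (htop · j) (Pᵀ *ᵥ w)]
  have hZb_w : w ⬝ᵥ Zb *ᵥ w ≤ M * ∑ i, w i ^ 2 := by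
    rw [dotProduct_mulVec_spectral hZb, ← sum_sq_transpose_mulVec_add hBBp w, hBw]
    simpa using sum_mul_sq_le hM (Bpᵀ *ᵥ w)
  have hpert : w ⬝ᵥ (Zm - Zb) *ᵥ w ≤ specNorm (Zm - Zb) * ∑ i, w i ^ 2 := by
    have h := dotProduct_mulVec_le_specNorm (Zm - Zb) w w
    rwa [mul_left_comm, Real.mul_self_sqrt hwpos.le] at h
  rw [sub_mulVec, dotProduct_sub] at hpert
  exact le_of_mul_le_mul_right (by linarith) hwpos

theorem stmt16_general (d k : ℕ) (Zm Zb : Matrix (Fin d) (Fin d) ℝ)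
    (Bhat B : Matrix (Fin d) (Fin k) ℝ)
    (Bhatp Bp : Matrix (Fin d) (Fin (d - k)) ℝ)
    (hBhat : Bhatᵀ * Bhat = 1) (hBhatp : Bhatpᵀ * Bhatp = 1)
    (hcomp1 : Bhat * Bhatᵀ + Bhatp * Bhatpᵀ = 1)
    (hB : Bᵀ * B = 1)
    (hcomp2 : B * Bᵀ + Bp * Bpᵀ = 1)
    (D1 : Fin k → ℝ) (D2 : Fin (d - k) → ℝ)
    (hZm : Zm = Bhat * Matrix.diagonal D1 * Bhatᵀ + Bhatp * Matrix.diagonal D2 * Bhatpᵀ)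
    (htop : ∀ i j, D2 j ≤ D1 i)
    (E1 : Fin k → ℝ) (E2 : Fin (d - k) → ℝ)
    (hZb : Zb = B * Matrix.diagonal E1 * Bᵀ + Bp * Matrix.diagonal E2 * Bpᵀ)
    (g : ℝ) (hg : 0 < g) (hgap : ∀ i j, E2 j + g ≤ E1 i)
    (hpert : specNorm (Zm - Zb) ≤ g / 2) :
    specNorm (Bhatpᵀ * B) ≤ specNorm (Zm - Zb) / (g - specNorm (Zm - Zb)) ∧
    specNorm (Bhatpᵀ * B) ≤ (2 / g) * specNorm (Zm - Zb) := by
  set ε := specNorm (Zm - Zb)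
  have hε : 0 ≤ ε := specNorm_nonneg _
  have hgε : 0 < g - ε := by linarith
  have hsep : ∀ j i, D2 j + (g - ε) ≤ E1 i := fun j i => by
    linarith [weyl_le_add_specNorm_sub hBhat hBhatp hcomp1 hcomp2 hZm htop hZb
      (M := E1 i - g) (fun j' => by linarith [hgap i j']) j]
  have hR : specNorm (Bhatpᵀ * (Zb - Zm) * B) ≤ ε :=
    (specNorm_transpose_mul_mul_le hcomp1 hB _).trans_eq (specNorm_sub_comm _ _)
  have hsin : specNorm (Bhatpᵀ * B) ≤ ε / (g - ε) := by
    rw [le_div_iff₀ hgε, mul_comm]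
    refine (mul_specNorm_le_specNorm_mul_diagonal_sub _ hsep).trans ?_
    rwa [← transpose_mul_sub_mul_eq_mul_diagonal_sub
      (transpose_mul_eq_zero_of_add_eq_one hBhat hcomp1) hBhatp hB
      (transpose_mul_eq_zero_of_add_eq_one hB hcomp2) hZm hZb]
  refine ⟨hsin, hsin.trans ?_⟩
  calc ε / (g - ε) ≤ ε / (g / 2) := div_le_div_of_nonneg_left hε (by positivity) (by linarith)
    _ = 2 / g * ε := by field_simp

/-- Davis–Kahan sin-θ theorem.  `Bhat` holds the top-`k` eigenvectors of the symmetric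
matrix `Zm` (witnessed by the spectral decomposition with eigenvalues `D1 ≥ D2`),
`Bhatp` an orthonormal complement of `Bhat`, and `B` holds the top-`k` eigenvectors of
the symmetric matrix `Zb` (eigenvalues `E1`, `E2`) with eigengap `g`. -/
theorem stmt16 (d k : ℕ) (Zm Zb : Matrix (Fin d) (Fin d) ℝ)
    (Bhat B : Matrix (Fin d) (Fin k) ℝ)
    (Bhatp Bp : Matrix (Fin d) (Fin (d - k)) ℝ)
    (hBhat : Bhatᵀ * Bhat = 1) (hBhatp : Bhatpᵀ * Bhatp = 1)
    (hcomp1 : Bhat * Bhatᵀ + Bhatp * Bhatpᵀ = 1)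
    (hB : Bᵀ * B = 1) (hBp : Bpᵀ * Bp = 1)
    (hcomp2 : B * Bᵀ + Bp * Bpᵀ = 1)
    (D1 : Fin k → ℝ) (D2 : Fin (d - k) → ℝ)
    (hZm : Zm = Bhat * Matrix.diagonal D1 * Bhatᵀ + Bhatp * Matrix.diagonal D2 * Bhatpᵀ)
    (htop : ∀ i j, D2 j ≤ D1 i)
    (E1 : Fin k → ℝ) (E2 : Fin (d - k) → ℝ)
    (hZb : Zb = B * Matrix.diagonal E1 * Bᵀ + Bp * Matrix.diagonal E2 * Bpᵀ)
    (g : ℝ) (hg : 0 < g) (hgap : ∀ i j, E2 j + g ≤ E1 i)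
    (hpert : specNorm (Zm - Zb) ≤ g / 2) :
    specNorm (Bhatpᵀ * B) ≤ specNorm (Zm - Zb) / (g - specNorm (Zm - Zb)) ∧
    specNorm (Bhatpᵀ * B) ≤ (2 / g) * specNorm (Zm - Zb) :=
  stmt16_general d k Zm Zb Bhat B Bhatp Bp hBhat hBhatp hcomp1 hB hcomp2 D1 D2 hZm htop E1 E2 hZb g
    hg hgap hpert
end
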